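/- (Stagnation of Lawson's iteration with exponent 2) Let w ∈ ℝ^m with w_j > 0 for all j and ∑_j w_j = 1, suppose d(w) > 0, and define w' ∈ ℝ^m by w'_j = w_j |r_j(w)|² / d(w). Let a' ∈ ℂ^n attain inf_{a ∈ ℂ^n} ∑_{j=1}^m w'_j |f_j − (Ψ a)_j|², with residual r'_j = f_j − (Ψ a')_j. If ∑_{j=1}^m w'_j |r'_j|² = d(w), then there exists a constant c ∈ ℂ such that conj(r_j(w)) · r'_j = c for every index j. -/

import Mathlib

/-!
By the normal equations the residual `r = r(w)` is orthogonal to the range of `Ψ` in the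
`w`-weighted inner product, so for any `a'` the numbers `z_j = conj(r_j) · r'_j` have
`w`-mean `d(w)`. Stagnation says that their `w`-weighted second moment is `d(w)²`, i.e. the
variance `∑ w_j |z_j - d(w)|²` vanishes, and since every `w_j > 0` all `z_j` equal `d(w)`.
-/

/-- The residual `r(w) = f − Ψ a(w)` of the weighted least-squares problem, where
`a(w) = (Ψᴴ W Ψ)⁻¹ Ψᴴ W f` and `W = diag(w)`. -/
noncomputable def lsResidual (m n : ℕ) (f : Fin m → ℂ) (Ψ : Matrix (Fin m) (Fin n) ℂ)
    (w : Fin m → ℝ) : Fin m → ℂ :=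
  f - Ψ.mulVec
    ((Ψ.conjTranspose * Matrix.diagonal (fun j => (w j : ℂ)) * Ψ)⁻¹.mulVec
      ((Ψ.conjTranspose * Matrix.diagonal (fun j => (w j : ℂ))).mulVec f))

/-- The `L_2` dual function `d(w) = ∑_j w_j |r_j(w)|²`. -/
noncomputable def lsDual (m n : ℕ) (f : Fin m → ℂ) (Ψ : Matrix (Fin m) (Fin n) ℂ)
    (w : Fin m → ℝ) : ℝ :=
  ∑ j, w j * ‖lsResidual m n f Ψ w j‖ ^ 2

open Matrix ComplexConjugate

theorem Matrix.mulVec_injective_of_rank_eq_card {K m n : Type*} [Field K] [Fintype m] [Fintype n]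
    {A : Matrix m n K} (h : A.rank = Fintype.card n) : Function.Injective A.mulVec :=
  mulVec_injective_iff.mpr <| linearIndependent_iff_card_eq_finrank_span.mpr <| by
    rw [← h, rank_eq_finrank_span_cols]; rfl

theorem Matrix.mulVec_sub_mulVec_inv_mul_mulVec {K m n : Type*} [CommRing K] [Fintype m]
    [Fintype n] [DecidableEq n] {A : Matrix n m K} {B : Matrix m n K} (h : IsUnit (A * B).det)
    (f : m → K) : A *ᵥ (f - B *ᵥ ((A * B)⁻¹ *ᵥ (A *ᵥ f))) = 0 := by
  rw [mulVec_sub, mulVec_mulVec, mulVec_mulVec, mul_nonsing_inv _ h, one_mulVec, sub_self]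

theorem eq_of_sum_smul_eq_of_sum_mul_norm_sq_eq {ι E : Type*} [Fintype ι]
    [NormedAddCommGroup E] [InnerProductSpace ℝ E] {w : ι → ℝ} {z : ι → E} {c : E}
    (hw : ∀ i, 0 < w i) (hw1 : ∑ i, w i = 1) (hmean : ∑ i, w i • z i = c)
    (hsq : ∑ i, w i * ‖z i‖ ^ 2 = ‖c‖ ^ 2) (i : ι) : z i = c := by
  have hvar : ∑ i, w i * ‖z i - c‖ ^ 2 = 0 := by
    have hinner : ∑ i, w i * inner ℝ (z i) c = ‖c‖ ^ 2 := by
      rw [← real_inner_self_eq_norm_sq, ← hmean, sum_inner]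
      simp only [real_inner_smul_left]
    calc ∑ i, w i * ‖z i - c‖ ^ 2
        = ∑ i, w i * ‖z i‖ ^ 2 - 2 * ∑ i, w i * inner ℝ (z i) c + (∑ i, w i) * ‖c‖ ^ 2 := by
          simp only [norm_sub_sq_real, Finset.mul_sum, Finset.sum_mul, ← Finset.sum_sub_distrib,
            ← Finset.sum_add_distrib]
          exact Finset.sum_congr rfl fun i _ => by ring
      _ = 0 := by rw [hsq, hinner, hw1]; ring
  have hi := (Finset.sum_eq_zero_iff_of_nonneg fun i _ =>
    mul_nonneg (hw i).le (sq_nonneg _)).mp hvar i (Finset.mem_univ i)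
  simpa [(hw i).ne', sub_eq_zero] using hi

section WeightedLeastSquares

variable {m n : ℕ} {f : Fin m → ℂ} {Ψ : Matrix (Fin m) (Fin n) ℂ} {w : Fin m → ℝ}

open scoped ComplexOrder in
theorem isUnit_det_conjTranspose_mul_diagonal_mul (hrank : Ψ.rank = n) (hw : ∀ j, 0 < w j) :
    IsUnit (Ψᴴ * diagonal (fun j => (w j : ℂ)) * Ψ).det := by
  have hW : (diagonal fun j => (w j : ℂ)).PosDef :=
    PosDef.diagonal fun j => by exact_mod_cast hw j
  have hΨ : Function.Injective Ψ.mulVec := mulVec_injective_of_rank_eq_card (by simpa using hrank)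
  exact (isUnit_iff_isUnit_det _).mp (hW.conjTranspose_mul_mul_same hΨ).isUnit

theorem sum_mul_conj_lsResidual_mul_mulVec (hrank : Ψ.rank = n) (hw : ∀ j, 0 < w j)
    (v : Fin n → ℂ) : ∑ j, (w j : ℂ) * conj (lsResidual m n f Ψ w j) * (Ψ *ᵥ v) j = 0 := by
  set W := diagonal fun j => (w j : ℂ)
  have hnormal : Ψᴴ *ᵥ (W *ᵥ lsResidual m n f Ψ w) = 0 := by
    rw [mulVec_mulVec]
    exact mulVec_sub_mulVec_inv_mul_mulVec (isUnit_det_conjTranspose_mul_diagonal_mul hrank hw) f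
  calc ∑ j, (w j : ℂ) * conj (lsResidual m n f Ψ w j) * (Ψ *ᵥ v) j
      = star (W *ᵥ lsResidual m n f Ψ w) ⬝ᵥ (Ψ *ᵥ v) := by
        simp [W, dotProduct, mulVec_diagonal]
    _ = 0 := by
        rw [dotProduct_mulVec, ← conjTranspose_conjTranspose Ψ, ← star_mulVec,
          conjTranspose_conjTranspose, hnormal, star_zero, zero_dotProduct]

theorem sum_mul_conj_lsResidual_mul_sub_mulVec (hrank : Ψ.rank = n) (hw : ∀ j, 0 < w j)
    (a : Fin n → ℂ) :
    ∑ j, (w j : ℂ) * (conj (lsResidual m n f Ψ w j) * (f j - (Ψ *ᵥ a) j)) = lsDual m n f Ψ w := by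
  obtain ⟨a₀, hr⟩ : ∃ a₀, lsResidual m n f Ψ w = f - Ψ *ᵥ a₀ := ⟨_, rfl⟩
  have hsplit : f - Ψ *ᵥ a = lsResidual m n f Ψ w + Ψ *ᵥ (a₀ - a) := by
    rw [hr, mulVec_sub]; abel
  calc ∑ j, (w j : ℂ) * (conj (lsResidual m n f Ψ w j) * (f j - (Ψ *ᵥ a) j))
      = ∑ j, (w j : ℂ) * (conj (lsResidual m n f Ψ w j) * lsResidual m n f Ψ w j)
        + ∑ j, (w j : ℂ) * conj (lsResidual m n f Ψ w j) * (Ψ *ᵥ (a₀ - a)) j := by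
        rw [← Finset.sum_add_distrib]
        refine Finset.sum_congr rfl fun j _ => ?_
        rw [show f j - (Ψ *ᵥ a) j = (f - Ψ *ᵥ a) j from rfl, hsplit, Pi.add_apply]
        ring
    _ = lsDual m n f Ψ w := by
        rw [sum_mul_conj_lsResidual_mul_mulVec hrank hw, add_zero, lsDual]
        push_cast
        simp only [Complex.conj_mul']

end WeightedLeastSquares

theorem lawson_stagnation_general
    (m n : ℕ)
    (f : Fin m → ℂ) (Ψ : Matrix (Fin m) (Fin n) ℂ) (hrank : Ψ.rank = n)
    (w : Fin m → ℝ) (hw : ∀ j, 0 < w j) (hw1 : ∑ j, w j = 1)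
    (hd : 0 < lsDual m n f Ψ w)
    (a' : Fin n → ℂ)
    (hstag : (∑ j, (w j * ‖lsResidual m n f Ψ w j‖ ^ 2 / lsDual m n f Ψ w)
          * ‖f j - Ψ.mulVec a' j‖ ^ 2) = lsDual m n f Ψ w) :
    ∃ c : ℂ, ∀ j,
      (starRingEnd ℂ) (lsResidual m n f Ψ w j) * (f j - Ψ.mulVec a' j) = c := by
  set r := lsResidual m n f Ψ w
  set d := lsDual m n f Ψ w
  refine ⟨d, eq_of_sum_smul_eq_of_sum_mul_norm_sq_eq hw hw1 ?_ ?_⟩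
  · simpa only [Complex.real_smul] using sum_mul_conj_lsResidual_mul_sub_mulVec (f := f) hrank hw a'
  · rw [Complex.norm_real, Real.norm_of_nonneg hd.le]
    have hsecond : ∑ j, w j * ‖r j‖ ^ 2 * ‖f j - (Ψ *ᵥ a') j‖ ^ 2 = d * d :=
      calc _ = (∑ j, w j * ‖r j‖ ^ 2 / d * ‖f j - (Ψ *ᵥ a') j‖ ^ 2) * d := by
            rw [Finset.sum_mul]
            exact Finset.sum_congr rfl fun j _ => by field_simp
        _ = d * d := by rw [hstag]
    simpa only [norm_mul, Complex.norm_conj, mul_pow, ← mul_assoc, sq d] using hsecond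

/-- Stagnation of Lawson's iteration with exponent 2: if the updated weights
`w'_j = w_j |r_j(w)|² / d(w)` yield a dual value equal to `d(w)` at a minimizer `a'`,
then `conj(r_j(w)) · r'_j` is constant over `j`, where `r'_j = f_j − (Ψ a')_j`. -/
theorem lawson_stagnation
    (m n : ℕ) (hn : 0 < n) (hnm : n ≤ m)
    (f : Fin m → ℂ) (Ψ : Matrix (Fin m) (Fin n) ℂ) (hrank : Ψ.rank = n)
    (w : Fin m → ℝ) (hw : ∀ j, 0 < w j) (hw1 : ∑ j, w j = 1)
    (hd : 0 < lsDual m n f Ψ w)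
    (a' : Fin n → ℂ)
    (ha' : ∀ a : Fin n → ℂ,
      (∑ j, (w j * ‖lsResidual m n f Ψ w j‖ ^ 2 / lsDual m n f Ψ w)
          * ‖f j - Ψ.mulVec a' j‖ ^ 2)
        ≤ ∑ j, (w j * ‖lsResidual m n f Ψ w j‖ ^ 2 / lsDual m n f Ψ w)
          * ‖f j - Ψ.mulVec a j‖ ^ 2)
    (hstag : (∑ j, (w j * ‖lsResidual m n f Ψ w j‖ ^ 2 / lsDual m n f Ψ w)
          * ‖f j - Ψ.mulVec a' j‖ ^ 2) = lsDual m n f Ψ w) :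
    ∃ c : ℂ, ∀ j,
      (starRingEnd ℂ) (lsResidual m n f Ψ w j) * (f j - Ψ.mulVec a' j) = c :=
  lawson_stagnation_general m n f Ψ hrank w hw hw1 hd a' hstag
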